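/- Let κ₀, κ₁, κ₂ ∈ {−1, +1} with κ₁ = κ₂. Then for all ξ, η ∈ ℝ⁴, the phase q_K(ξ, η) = −κ₀|ξ| − κ₁⟨ξ+η⟩ + κ₂⟨η⟩ satisfies the time-resonance lower bound |q_K(ξ, η)| ≥ |ξ| / (⟨η⟩ (⟨ξ⟩ + ⟨ξ+η⟩ + ⟨η⟩)). -/

import Mathlib

/-!
Write `a = |ξ|`, `r = ⟨η⟩`, `s = ⟨ξ+η⟩`. Up to sign the phase is `a + s - r` or `a + r - s`,
and each of these is a difference of squares divided by a sum bounded by `⟨ξ⟩ + s + r`.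
Since `s² - r² = a² + 2ξ·η` and `|s - r| ≤ a`, both `(a+s)² - r²` and `(a+r)² - s²` are at least
`2a(r - |η|) = 2a / (r + |η|) ≥ a / r`.
-/

/-- Japanese bracket `⟨x⟩ = √(1 + |x|²)` on `ℝ⁴`. -/
noncomputable def jb (x : EuclideanSpace ℝ (Fin 4)) : ℝ := Real.sqrt (1 + ‖x‖ ^ 2)

lemma div_le_sub_of_le_sq_sub_sq {c x y D : ℝ} (hc : 0 ≤ c) (hxy : 0 < x + y) (hD : x + y ≤ D)
    (h : c ≤ x ^ 2 - y ^ 2) : c / D ≤ x - y :=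
  calc c / D ≤ c / (x + y) := div_le_div_of_nonneg_left hc hxy hD
    _ ≤ (x ^ 2 - y ^ 2) / (x + y) := div_le_div_of_nonneg_right h hxy.le
    _ = x - y := by rw [sq_sub_sq, mul_div_cancel_left₀ _ hxy.ne']

section JapaneseBracket

variable (x y : EuclideanSpace ℝ (Fin 4))

lemma jb_sq : jb x ^ 2 = 1 + ‖x‖ ^ 2 := Real.sq_sqrt (by positivity)

lemma jb_nonneg : 0 ≤ jb x := Real.sqrt_nonneg _

lemma norm_lt_jb : ‖x‖ < jb x :=
  (abs_lt_of_sq_lt_sq' (by rw [jb_sq]; linarith) (jb_nonneg x)).2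

lemma jb_pos : 0 < jb x := (norm_nonneg x).trans_lt (norm_lt_jb x)

lemma jb_sub_norm : jb x - ‖x‖ = (jb x + ‖x‖)⁻¹ := by
  refine eq_inv_of_mul_eq_one_left ?_
  rw [mul_comm, ← sq_sub_sq, jb_sq]
  ring

lemma inv_two_mul_jb_le_jb_sub_norm : (2 * jb x)⁻¹ ≤ jb x - ‖x‖ := by
  rw [jb_sub_norm]
  exact inv_anti₀ (by linarith [norm_nonneg x, jb_pos x]) (by linarith [norm_lt_jb x])

lemma abs_jb_sub_jb_le : |jb x - jb y| ≤ ‖x - y‖ := by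
  have hinner : inner ℝ x y ^ 2 ≤ (‖x‖ * ‖y‖) ^ 2 :=
    sq_le_sq' (abs_le.mp (abs_real_inner_le_norm x y)).1 (real_inner_le_norm x y)
  -- `(1 + x·y)² ≤ (1 + |x|²)(1 + |y|²)`: Cauchy–Schwarz for the vectors `(1, x)` and `(1, y)`
  have hprod : 1 + inner ℝ x y ≤ jb x * jb y := by
    refine (abs_le_of_sq_le_sq' ?_ (mul_nonneg (jb_nonneg x) (jb_nonneg y))).2
    rw [mul_pow, jb_sq, jb_sq]
    linarith [sq_nonneg (‖x‖ - ‖y‖), real_inner_le_norm x y]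
  refine abs_le_of_sq_le_sq ?_ (norm_nonneg _)
  rw [norm_sub_sq_real, sub_sq, jb_sq, jb_sq]
  linarith

lemma norm_div_jb_le : ‖x‖ / jb y ≤ 2 * ‖x‖ * (jb y - ‖y‖) :=
  calc ‖x‖ / jb y = 2 * ‖x‖ * (2 * jb y)⁻¹ := by ring
    _ ≤ 2 * ‖x‖ * (jb y - ‖y‖) :=
      mul_le_mul_of_nonneg_left (inv_two_mul_jb_le_jb_sub_norm y) (by positivity)

lemma jb_add_sq_sub_jb_sq : jb (x + y) ^ 2 - jb y ^ 2 = ‖x‖ ^ 2 + 2 * inner ℝ x y := by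
  rw [jb_sq, jb_sq, norm_add_sq_real]
  ring

end JapaneseBracket

section PhaseBounds

variable (ξ η : EuclideanSpace ℝ (Fin 4))

lemma norm_div_le_norm_add_jb_sub_jb_add :
    ‖ξ‖ / (jb η * (jb ξ + jb (ξ + η) + jb η)) ≤ ‖ξ‖ + jb η - jb (ξ + η) := by
  rw [← div_div]
  refine div_le_sub_of_le_sq_sub_sq (div_nonneg (norm_nonneg ξ) (jb_nonneg η))
    (by linarith [norm_nonneg ξ, jb_pos η, jb_pos (ξ + η)]) (by linarith [norm_lt_jb ξ]) ?_
  linarith [norm_div_jb_le ξ η, real_inner_le_norm ξ η, jb_add_sq_sub_jb_sq ξ η]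

lemma norm_div_le_norm_add_jb_add_sub_jb :
    ‖ξ‖ / (jb η * (jb ξ + jb (ξ + η) + jb η)) ≤ ‖ξ‖ + jb (ξ + η) - jb η := by
  rw [← div_div]
  refine div_le_sub_of_le_sq_sub_sq (div_nonneg (norm_nonneg ξ) (jb_nonneg η))
    (by linarith [norm_nonneg ξ, jb_pos η, jb_pos (ξ + η)]) (by linarith [norm_lt_jb ξ]) ?_
  have hgap : jb η - ‖ξ‖ ≤ jb (ξ + η) := by
    have := abs_jb_sub_jb_le (ξ + η) η
    rw [add_sub_cancel_right] at this
    linarith [neg_abs_le (jb (ξ + η) - jb η)]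
  linarith [norm_div_jb_le ξ η, (abs_le.mp (abs_real_inner_le_norm ξ η)).1,
    jb_add_sq_sub_jb_sq ξ η, mul_le_mul_of_nonneg_left hgap (norm_nonneg ξ)]

end PhaseBounds

theorem maxwell_phase_time_resonance_lower_bound_general (κ₀ κ₁ κ₂ : ℝ)
    (h₀ : κ₀ = -1 ∨ κ₀ = 1) (h₁ : κ₁ = -1 ∨ κ₁ = 1)
    (heq : κ₁ = κ₂)
    (ξ η : EuclideanSpace ℝ (Fin 4)) :
    ‖ξ‖ / (jb η * (jb ξ + jb (ξ + η) + jb η))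
      ≤ |(-κ₀) * ‖ξ‖ - κ₁ * jb (ξ + η) + κ₂ * jb η| := by
  subst heq
  have hphase : |(-κ₀) * ‖ξ‖ - κ₁ * jb (ξ + η) + κ₁ * jb η| = |‖ξ‖ + jb (ξ + η) - jb η| ∨
      |(-κ₀) * ‖ξ‖ - κ₁ * jb (ξ + η) + κ₁ * jb η| = |‖ξ‖ + jb η - jb (ξ + η)| := by
    rcases h₀ with rfl | rfl <;> rcases h₁ with rfl | rfl
    · left; congr 1; ring
    · right; congr 1; ring
    · right; rw [← abs_neg]; congr 1; ring
    · left; rw [← abs_neg]; congr 1; ring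
  rcases hphase with h | h <;> rw [h]
  · exact (norm_div_le_norm_add_jb_add_sub_jb ξ η).trans (le_abs_self _)
  · exact (norm_div_le_norm_add_jb_sub_jb_add ξ η).trans (le_abs_self _)

/-- If `κ₁ = κ₂`, then for all `ξ, η ∈ ℝ⁴`, the phase
`q_K(ξ, η) = −κ₀|ξ| − κ₁⟨ξ+η⟩ + κ₂⟨η⟩` satisfies the time-resonance lower bound
`|q_K(ξ, η)| ≥ |ξ| / (⟨η⟩ (⟨ξ⟩ + ⟨ξ+η⟩ + ⟨η⟩))`. -/
theorem maxwell_phase_time_resonance_lower_bound (κ₀ κ₁ κ₂ : ℝ)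
    (h₀ : κ₀ = -1 ∨ κ₀ = 1) (h₁ : κ₁ = -1 ∨ κ₁ = 1) (h₂ : κ₂ = -1 ∨ κ₂ = 1)
    (heq : κ₁ = κ₂)
    (ξ η : EuclideanSpace ℝ (Fin 4)) :
    ‖ξ‖ / (jb η * (jb ξ + jb (ξ + η) + jb η))
      ≤ |(-κ₀) * ‖ξ‖ - κ₁ * jb (ξ + η) + κ₂ * jb η| :=
  maxwell_phase_time_resonance_lower_bound_general κ₀ κ₁ κ₂ h₀ h₁ heq ξ η
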